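/- arXiv:0806.4415 — 5 statements merged into one kernel-verified Lean document; each statement's English description precedes it below -/
import Mathlib

section
/- Let f, g : [x₁, x₂] → ℝ be nonnegative, strictly increasing, differentiable functions such that the ratio f'(x)/g'(x) is decreasing on [x₁, x₂]. Let u ∈ [0,1] and let x_int ∈ [x₁, x₂] satisfy f(x_int) = u·f(x₁) + (1-u)·f(x₂). Then g(x_int) ≤ u·g(x₁) + (1-u)·g(x₂). -/
/-! Cauchy's mean value theorem on `[x₁, x_int]` and on `[x_int, x₂]` writes the increments of `f`
as the increments of `g` times `f'/g'` at points `c₁ ≤ c₂`; since `f'/g'` decreases, `f` grows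
relative to `g` at least as fast on the left piece as on the right one, i.e. `f` is concave as a
function of `g`. Rewriting the increments of `f` through `u` turns this into the claim. -/

open Set

theorem exists_ratio_hasDerivWithinAt_eq_ratio_slope {s : Set ℝ} {f g f' g' : ℝ → ℝ} {x y : ℝ}
    (hxy : x < y) (hs : Icc x y ⊆ s)
    (hf : ∀ t ∈ s, HasDerivWithinAt f (f' t) s t) (hg : ∀ t ∈ s, HasDerivWithinAt g (g' t) s t) :
    ∃ c ∈ Ioo x y, (g y - g x) * f' c = (f y - f x) * g' c := by
  have hderiv {φ φ' : ℝ → ℝ} (hφ : ∀ t ∈ s, HasDerivWithinAt φ (φ' t) s t) :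
      ∀ t ∈ Ioo x y, HasDerivAt φ (φ' t) t := fun t ht =>
    ((hφ t (hs (Ioo_subset_Icc_self ht))).mono hs).hasDerivAt (Icc_mem_nhds ht.1 ht.2)
  have hcont {φ φ' : ℝ → ℝ} (hφ : ∀ t ∈ s, HasDerivWithinAt φ (φ' t) s t) :
      ContinuousOn φ (Icc x y) := fun t ht => ((hφ t (hs ht)).continuousWithinAt).mono hs
  exact exists_ratio_hasDerivAt_eq_ratio_slope f f' hxy (hcont hf) (hderiv hf) g g'
    (hcont hg) (hderiv hg)

theorem sub_mul_sub_le_sub_mul_sub_of_antitoneOn_div {f g f' g' : ℝ → ℝ} {a b x : ℝ}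
    (hx : x ∈ Icc a b) (hgmono : MonotoneOn g (Icc a b))
    (hfd : ∀ t ∈ Icc a b, HasDerivWithinAt f (f' t) (Icc a b) t)
    (hgd : ∀ t ∈ Icc a b, HasDerivWithinAt g (g' t) (Icc a b) t)
    (hgpos : ∀ t ∈ Icc a b, 0 < g' t) (hratio : AntitoneOn (fun t => f' t / g' t) (Icc a b)) :
    (f b - f x) * (g x - g a) ≤ (f x - f a) * (g b - g x) := by
  rcases hx.1.eq_or_lt with rfl | hax
  · simp
  rcases hx.2.eq_or_lt with rfl | hxb
  · simp
  obtain ⟨c₁, hc₁, hf₁⟩ :=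
    exists_ratio_hasDerivWithinAt_eq_ratio_slope hax (Icc_subset_Icc le_rfl hxb.le) hfd hgd
  obtain ⟨c₂, hc₂, hf₂⟩ :=
    exists_ratio_hasDerivWithinAt_eq_ratio_slope hxb (Icc_subset_Icc hax.le le_rfl) hfd hgd
  have hc₁I : c₁ ∈ Icc a b := ⟨hc₁.1.le, hc₁.2.le.trans hxb.le⟩
  have hc₂I : c₂ ∈ Icc a b := ⟨hax.le.trans hc₂.1.le, hc₂.2.le⟩
  have hslope : f' c₂ / g' c₂ ≤ f' c₁ / g' c₁ := hratio hc₁I hc₂I (hc₁.2.trans hc₂.1).le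
  have hleft : f x - f a = (g x - g a) * (f' c₁ / g' c₁) := by
    field_simp [(hgpos c₁ hc₁I).ne']; linarith
  have hright : f b - f x = (g b - g x) * (f' c₂ / g' c₂) := by
    field_simp [(hgpos c₂ hc₂I).ne']; linarith
  have hga : 0 ≤ g x - g a := sub_nonneg.2 (hgmono (left_mem_Icc.2 (hax.trans hxb).le) hx hax.le)
  have hgb : 0 ≤ g b - g x := sub_nonneg.2 (hgmono hx (right_mem_Icc.2 (hax.trans hxb).le) hxb.le)
  rw [hleft, hright]
  nlinarith [mul_nonneg hga hgb]

theorem stmt_0_general (x₁ x₂ : ℝ) (hx : x₁ < x₂) (f g f' g' : ℝ → ℝ)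
    (hfmono : StrictMonoOn f (Icc x₁ x₂)) (hgmono : StrictMonoOn g (Icc x₁ x₂))
    (hfd : ∀ x ∈ Icc x₁ x₂, HasDerivWithinAt f (f' x) (Icc x₁ x₂) x)
    (hgd : ∀ x ∈ Icc x₁ x₂, HasDerivWithinAt g (g' x) (Icc x₁ x₂) x)
    (hgpos : ∀ x ∈ Icc x₁ x₂, 0 < g' x)
    (hratio : AntitoneOn (fun x => f' x / g' x) (Icc x₁ x₂))
    (u : ℝ)
    (xint : ℝ) (hxint : xint ∈ Icc x₁ x₂)
    (heq : f xint = u * f x₁ + (1 - u) * f x₂) :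
    g xint ≤ u * g x₁ + (1 - u) * g x₂ := by
  have hkey := sub_mul_sub_le_sub_mul_sub_of_antitoneOn_div hxint hgmono.monotoneOn hfd hgd
    hgpos hratio
  have hf : 0 < f x₂ - f x₁ :=
    sub_pos.2 (hfmono (left_mem_Icc.2 hx.le) (right_mem_Icc.2 hx.le) hx)
  rw [heq] at hkey
  have hu : u * (g xint - g x₁) ≤ (1 - u) * (g x₂ - g xint) :=
    le_of_mul_le_mul_left (by linarith) hf
  linarith

theorem stmt_0 (x₁ x₂ : ℝ) (hx : x₁ < x₂) (f g f' g' : ℝ → ℝ)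
    (hf0 : ∀ x ∈ Icc x₁ x₂, 0 ≤ f x) (hg0 : ∀ x ∈ Icc x₁ x₂, 0 ≤ g x)
    (hfmono : StrictMonoOn f (Icc x₁ x₂)) (hgmono : StrictMonoOn g (Icc x₁ x₂))
    (hfd : ∀ x ∈ Icc x₁ x₂, HasDerivWithinAt f (f' x) (Icc x₁ x₂) x)
    (hgd : ∀ x ∈ Icc x₁ x₂, HasDerivWithinAt g (g' x) (Icc x₁ x₂) x)
    (hgpos : ∀ x ∈ Icc x₁ x₂, 0 < g' x)
    (hratio : AntitoneOn (fun x => f' x / g' x) (Icc x₁ x₂))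
    (u : ℝ) (hu : u ∈ Icc (0 : ℝ) 1)
    (xint : ℝ) (hxint : xint ∈ Icc x₁ x₂)
    (heq : f xint = u * f x₁ + (1 - u) * f x₂) :
    g xint ≤ u * g x₁ + (1 - u) * g x₂ :=
  stmt_0_general x₁ x₂ hx f g f' g' hfmono hgmono hfd hgd hgpos hratio u xint hxint heq
end

section
/- Let f, g : [x₁, x₂] → ℝ be nonnegative, strictly increasing, differentiable functions with f'/g' decreasing. For any finite collection of weights uᵢ ≥ 0 with ∑ uᵢ = 1 and points yᵢ ∈ [x₁, x₂], if x_int ∈ [x₁, x₂] satisfies f(x_int) = ∑ uᵢ f(yᵢ), then g(x_int) ≤ ∑ uᵢ g(yᵢ). -/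
/-! The ratio condition makes `f` "concave with respect to `g`": by the Cauchy mean value theorem
the graph of `f` against `g` lies below its tangent at `xint`,
`f z - f xint ≤ K (g z - g xint)` with `K = f' xint / g' xint`. Averaging this over the `y i`
gives `0 ≤ K (∑ uᵢ g(yᵢ) - g xint)`, which is the claim when `K > 0`. When `K ≤ 0` the tangent
inequality says that `f` is maximal at `xint`, so a mean of values of `f` can only equal `f xint`
if all the points carrying weight are `xint` itself. -/

open Set Topology

theorem Finset.sum_mul_sub_of_sum_eq_one {ι R : Type*} [CommRing R] {s : Finset ι} {u : ι → R}
    (hsum : ∑ i ∈ s, u i = 1) (v : ι → R) (c : R) :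
    ∑ i ∈ s, u i * (v i - c) = ∑ i ∈ s, u i * v i - c := by
  simp only [mul_sub, Finset.sum_sub_distrib, ← Finset.sum_mul, hsum, one_mul]

section WeightedMean

variable {ι 𝕜 : Type*} [CommRing 𝕜] [LinearOrder 𝕜] [IsStrictOrderedRing 𝕜]
  {s : Finset ι} {u : ι → 𝕜}

theorem le_sum_mul_of_sub_le_mul_sub {v w : ι → 𝕜} {a b K : 𝕜} (hu : ∀ i ∈ s, 0 ≤ u i)
    (hsum : ∑ i ∈ s, u i = 1) (hK : 0 < K) (htangent : ∀ i ∈ s, v i - a ≤ K * (w i - b))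
    (heq : a = ∑ i ∈ s, u i * v i) :
    b ≤ ∑ i ∈ s, u i * w i := by
  have h : 0 ≤ K * (∑ i ∈ s, u i * w i - b) := calc
    0 = ∑ i ∈ s, u i * (v i - a) := by rw [Finset.sum_mul_sub_of_sum_eq_one hsum, heq, sub_self]
    _ ≤ ∑ i ∈ s, u i * (K * (w i - b)) :=
      Finset.sum_le_sum fun i hi => mul_le_mul_of_nonneg_left (htangent i hi) (hu i hi)
    _ = K * ∑ i ∈ s, u i * (w i - b) := by rw [Finset.mul_sum]; simp only [mul_left_comm]
    _ = K * (∑ i ∈ s, u i * w i - b) := by rw [Finset.sum_mul_sub_of_sum_eq_one hsum]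
  exact sub_nonneg.1 (nonneg_of_mul_nonneg_right h hK)

theorem sum_mul_apply_eq_of_apply_le {α : Type*} {F G : α → 𝕜} {S : Set α} {y : ι → α} {x : α}
    (hF : InjOn F S) (hy : ∀ i ∈ s, y i ∈ S) (hx : x ∈ S) (hu : ∀ i ∈ s, 0 ≤ u i)
    (hsum : ∑ i ∈ s, u i = 1) (hle : ∀ i ∈ s, F (y i) ≤ F x)
    (heq : F x = ∑ i ∈ s, u i * F (y i)) :
    ∑ i ∈ s, u i * G (y i) = G x := by
  have hterm : ∀ i ∈ s, u i * F (y i) = u i * F x :=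
    (Finset.sum_eq_sum_iff_of_le fun i hi => mul_le_mul_of_nonneg_left (hle i hi) (hu i hi)).1
      (by rw [← Finset.sum_mul, hsum, one_mul, heq])
  calc ∑ i ∈ s, u i * G (y i) = ∑ i ∈ s, u i * G x := by
        refine Finset.sum_congr rfl fun i hi => ?_
        rcases eq_or_ne (u i) 0 with hui | hui
        · simp [hui]
        · rw [hF (hy i hi) hx (mul_left_cancel₀ hui (hterm i hi))]
    _ = G x := by rw [← Finset.sum_mul, hsum, one_mul]

end WeightedMean

section RatioOfDerivatives

variable {f g f' g' : ℝ → ℝ} {a b : ℝ}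
  (hfd : ∀ x ∈ Icc a b, HasDerivWithinAt f (f' x) (Icc a b) x)
  (hgd : ∀ x ∈ Icc a b, HasDerivWithinAt g (g' x) (Icc a b) x)
  (hgpos : ∀ x ∈ Icc a b, 0 < g' x)
include hfd hgd hgpos

theorem exists_mem_Ioo_sub_eq_sub_mul_ratio {p q : ℝ} (hp : p ∈ Icc a b) (hq : q ∈ Icc a b)
    (hpq : p < q) : ∃ c ∈ Ioo p q, f q - f p = (g q - g p) * (f' c / g' c) := by
  have hsub : Icc p q ⊆ Icc a b := Icc_subset_Icc hp.1 hq.2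
  have hnhds : ∀ c ∈ Ioo p q, Icc a b ∈ 𝓝 c := fun c hc =>
    Icc_mem_nhds (hp.1.trans_lt hc.1) (hc.2.trans_le hq.2)
  obtain ⟨c, hc, hcauchy⟩ := exists_ratio_hasDerivAt_eq_ratio_slope f f' hpq
    (fun z hz => (hfd z (hsub hz)).continuousWithinAt.mono hsub)
    (fun z hz => (hfd z (hsub (Ioo_subset_Icc_self hz))).hasDerivAt (hnhds z hz))
    g g' (fun z hz => (hgd z (hsub hz)).continuousWithinAt.mono hsub)
    (fun z hz => (hgd z (hsub (Ioo_subset_Icc_self hz))).hasDerivAt (hnhds z hz))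
  have hgc := hgpos c (hsub (Ioo_subset_Icc_self hc))
  refine ⟨c, hc, ?_⟩
  field_simp
  linarith

variable (hgmono : MonotoneOn g (Icc a b)) (hratio : AntitoneOn (fun x => f' x / g' x) (Icc a b))
include hgmono hratio

theorem sub_le_ratio_mul_sub {x z : ℝ} (hx : x ∈ Icc a b) (hz : z ∈ Icc a b) :
    f z - f x ≤ f' x / g' x * (g z - g x) := by
  rcases lt_trichotomy z x with hzx | rfl | hxz
  · obtain ⟨c, hc, hmvt⟩ := exists_mem_Ioo_sub_eq_sub_mul_ratio hfd hgd hgpos hz hx hzx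
    have hratio_c : f' x / g' x ≤ f' c / g' c :=
      hratio ⟨hz.1.trans hc.1.le, hc.2.le.trans hx.2⟩ hx hc.2.le
    have hg : 0 ≤ g x - g z := sub_nonneg.2 (hgmono hz hx hzx.le)
    linarith [mul_le_mul_of_nonneg_left hratio_c hg]
  · simp
  · obtain ⟨c, hc, hmvt⟩ := exists_mem_Ioo_sub_eq_sub_mul_ratio hfd hgd hgpos hx hz hxz
    have hratio_c : f' c / g' c ≤ f' x / g' x :=
      hratio hx ⟨hx.1.trans hc.1.le, hc.2.le.trans hz.2⟩ hc.1.le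
    have hg : 0 ≤ g z - g x := sub_nonneg.2 (hgmono hx hz hxz.le)
    linarith [mul_le_mul_of_nonneg_left hratio_c hg]

theorem apply_le_of_ratio_nonpos (hfmono : MonotoneOn f (Icc a b)) {x z : ℝ}
    (hx : x ∈ Icc a b) (hz : z ∈ Icc a b) (hK : f' x / g' x ≤ 0) : f z ≤ f x := by
  rcases le_total z x with hzx | hxz
  · exact hfmono hz hx hzx
  · have hg : 0 ≤ g z - g x := sub_nonneg.2 (hgmono hx hz hxz)
    linarith [sub_le_ratio_mul_sub hfd hgd hgpos hgmono hratio hx hz,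
      mul_nonpos_of_nonpos_of_nonneg hK hg]

end RatioOfDerivatives

theorem stmt_1_general (x₁ x₂ : ℝ) (f g f' g' : ℝ → ℝ)
    (hfmono : StrictMonoOn f (Icc x₁ x₂)) (hgmono : StrictMonoOn g (Icc x₁ x₂))
    (hfd : ∀ x ∈ Icc x₁ x₂, HasDerivWithinAt f (f' x) (Icc x₁ x₂) x)
    (hgd : ∀ x ∈ Icc x₁ x₂, HasDerivWithinAt g (g' x) (Icc x₁ x₂) x)
    (hgpos : ∀ x ∈ Icc x₁ x₂, 0 < g' x)
    (hratio : AntitoneOn (fun x => f' x / g' x) (Icc x₁ x₂))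
    (ι : Type*) (s : Finset ι) (u : ι → ℝ) (y : ι → ℝ)
    (hu : ∀ i ∈ s, 0 ≤ u i) (husum : ∑ i ∈ s, u i = 1)
    (hy : ∀ i ∈ s, y i ∈ Icc x₁ x₂)
    (xint : ℝ) (hxint : xint ∈ Icc x₁ x₂)
    (heq : f xint = ∑ i ∈ s, u i * f (y i)) :
    g xint ≤ ∑ i ∈ s, u i * g (y i) := by
  rcases lt_or_ge 0 (f' xint / g' xint) with hK | hK
  · exact le_sum_mul_of_sub_le_mul_sub hu husum hK (fun i hi =>
      sub_le_ratio_mul_sub hfd hgd hgpos hgmono.monotoneOn hratio hxint (hy i hi)) heq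
  · have hmax : ∀ i ∈ s, f (y i) ≤ f xint := fun i hi =>
      apply_le_of_ratio_nonpos hfd hgd hgpos hgmono.monotoneOn hratio hfmono.monotoneOn hxint
        (hy i hi) hK
    exact (sum_mul_apply_eq_of_apply_le hfmono.injOn hy hxint hu husum hmax heq).ge

theorem stmt_1 (x₁ x₂ : ℝ) (hx : x₁ < x₂) (f g f' g' : ℝ → ℝ)
    (hf0 : ∀ x ∈ Icc x₁ x₂, 0 ≤ f x) (hg0 : ∀ x ∈ Icc x₁ x₂, 0 ≤ g x)
    (hfmono : StrictMonoOn f (Icc x₁ x₂)) (hgmono : StrictMonoOn g (Icc x₁ x₂))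
    (hfd : ∀ x ∈ Icc x₁ x₂, HasDerivWithinAt f (f' x) (Icc x₁ x₂) x)
    (hgd : ∀ x ∈ Icc x₁ x₂, HasDerivWithinAt g (g' x) (Icc x₁ x₂) x)
    (hgpos : ∀ x ∈ Icc x₁ x₂, 0 < g' x)
    (hratio : AntitoneOn (fun x => f' x / g' x) (Icc x₁ x₂))
    (ι : Type*) (s : Finset ι) (u : ι → ℝ) (y : ι → ℝ)
    (hu : ∀ i ∈ s, 0 ≤ u i) (husum : ∑ i ∈ s, u i = 1)
    (hy : ∀ i ∈ s, y i ∈ Icc x₁ x₂)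
    (xint : ℝ) (hxint : xint ∈ Icc x₁ x₂)
    (heq : f xint = ∑ i ∈ s, u i * f (y i)) :
    g xint ≤ ∑ i ∈ s, u i * g (y i) :=
  stmt_1_general x₁ x₂ f g f' g' hfmono hgmono hfd hgd hgpos hratio ι s u y hu husum hy xint hxint
    heq
end

section
/- The function f(x) = h(x/2) + h((1-x)/2) - 1 is strictly increasing on [0, 1/2], where h is the binary entropy function. -/
/-! The arguments `x / 2` and `(1 - x) / 2` have constant sum `1 / 2` and move towards each
other as `x` grows to `1 / 2`; strict concavity of `h` then makes `h (x / 2) + h ((1 - x) / 2)`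
strictly increase. -/
open Set

noncomputable def binent (x : ℝ) : ℝ := -x * Real.logb 2 x - (1 - x) * Real.logb 2 (1 - x)

theorem StrictConcaveOn.strictMonoOn_add_comp_sub {s : Set ℝ} {g : ℝ → ℝ} {a c : ℝ}
    (hg : StrictConcaveOn ℝ s g) (hs : Icc a (c - a) ⊆ s) :
    StrictMonoOn (fun x => g x + g (c - x)) (Icc a (c / 2)) := by
  rintro x ⟨hax, -⟩ y ⟨-, hyc⟩ hxy
  have hd : 0 < c - 2 * x := by linarith
  have hx : x ∈ s := hs ⟨hax, by linarith⟩
  have hcx : c - x ∈ s := hs ⟨by linarith, by linarith⟩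
  have hne : x ≠ c - x := by intro h; linarith
  -- `y` and `c - y` are the convex combinations of `x, c - x` with weights `(t, 1 - t)` and
  -- `(1 - t, t)`, where `t = (c - x - y) / (c - 2x)`.
  set t := (c - x - y) / (c - 2 * x) with ht
  have h1t : 1 - t = (y - x) / (c - 2 * x) := by rw [ht, one_sub_div hd.ne']; ring_nf
  have ht0 : 0 < t := div_pos (by linarith) hd
  have ht1 : 0 < 1 - t := h1t ▸ div_pos (by linarith) hd
  have hy : t * x + (1 - t) * (c - x) = y := by
    rw [h1t, ht, div_mul_eq_mul_div, div_mul_eq_mul_div, ← add_div, div_eq_iff hd.ne']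
    ring
  have hcy : (1 - t) * x + t * (c - x) = c - y := by
    rw [h1t, ht, div_mul_eq_mul_div, div_mul_eq_mul_div, ← add_div, div_eq_iff hd.ne']
    ring
  have h₁ := hg.2 hx hcx hne ht0 ht1 (by ring)
  have h₂ := hg.2 hx hcx hne ht1 ht0 (by ring)
  simp only [smul_eq_mul, hy, hcy] at h₁ h₂
  linarith

theorem binent_eq_binEntropy_div_log_two (x : ℝ) : binent x = Real.binEntropy x / Real.log 2 := by
  simp only [binent, Real.binEntropy, Real.logb, Real.log_inv]
  ring

theorem stmt_6 :
    StrictMonoOn (fun x => binent (x / 2) + binent ((1 - x) / 2) - 1) (Icc (0 : ℝ) (1 / 2)) := by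
  have hmono := Real.strictConcave_binEntropy.strictMonoOn_add_comp_sub (a := 0) (c := 1 / 2)
    (Icc_subset_Icc le_rfl (by norm_num))
  rintro x ⟨hx0, hx1⟩ y ⟨hy0, hy1⟩ hxy
  have key := hmono ⟨by linarith, by linarith⟩ ⟨by linarith, by linarith⟩
    (by linarith : x / 2 < y / 2)
  have hlog2 : 0 < Real.log 2 := Real.log_pos one_lt_two
  simp only [binent_eq_binEntropy_div_log_two, ← add_div]
  rw [show (1 - x) / 2 = 1 / 2 - x / 2 by ring, show (1 - y) / 2 = 1 / 2 - y / 2 by ring]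
  gcongr
end

section
/- For p ∈ [1/6, 1/2) and x ∈ (0, 1/2), the inequality J(x*p)·U(x*p)/(1-2p) ≥ 2(J(x/2) - J((1-x)/2)) / (1/U(x/2) + 1/U((1-x)/2)) holds, with equality in the limit x → 1/2, where J(t) = log((1-t)/t), U(t) = t(1-t), and x*p = x(1-p) + (1-x)p. -/
/-!
Write `x = (1 - v) / 2` and `p = (1 - q) / 2`, so that `0 < v < 1`, `0 < q ≤ 2 / 3` and
`x * p = (1 - q v) / 2`. With `L u = log ((1 + u) / (1 - u)) = 2 artanh u`, the left side is
`2 (L v + L (v / 3)) / (16 / ((1 - v) (3 + v)) + 16 / ((1 + v) (3 - v)))` and the right side is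
`L (q v) (1 - q² v²) / (4 q)`. Both are compared with the polynomial `v / 2 - v³ / 6`, using
truncations of the odd power series `L u = ∑ 2 u^(2k+1) / (2k+1)`: from above (tail bounded by a
geometric series) on the left, and from below on the right.
Both sides are continuous at `x = 1 / 2`, where they vanish.
-/

open Set Filter

noncomputable def J (t : ℝ) : ℝ := Real.log ((1 - t) / t)

noncomputable def U (t : ℝ) : ℝ := t * (1 - t)

noncomputable def bconv (x p : ℝ) : ℝ := x * (1 - p) + (1 - x) * p

open Real Finset

lemma hasSum_log_one_add_div_one_sub {u : ℝ} (hu : |u| < 1) :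
    HasSum (fun k : ℕ => 2 * (1 / (2 * k + 1)) * u ^ (2 * k + 1)) (log ((1 + u) / (1 - u))) := by
  rw [log_div (by linarith [neg_abs_le u]) (by linarith [le_abs_self u])]
  exact hasSum_log_sub_log_of_abs_lt_one hu

lemma sum_range_le_log_one_add_div_one_sub {u : ℝ} (hu0 : 0 ≤ u) (hu1 : u < 1) (N : ℕ) :
    ∑ k ∈ range N, 2 * (1 / (2 * k + 1)) * u ^ (2 * k + 1) ≤ log ((1 + u) / (1 - u)) :=
  sum_le_hasSum _ (fun k _ => by positivity)
    (hasSum_log_one_add_div_one_sub (by rwa [abs_of_nonneg hu0]))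

lemma log_one_add_div_one_sub_le {u : ℝ} (hu0 : 0 ≤ u) (hu1 : u < 1) (N : ℕ) :
    log ((1 + u) / (1 - u)) ≤ ∑ k ∈ range N, 2 * (1 / (2 * k + 1)) * u ^ (2 * k + 1) +
      2 * u ^ (2 * N + 1) / ((2 * N + 1) * (1 - u ^ 2)) := by
  have htail := (hasSum_nat_add_iff' N).mpr
    (hasSum_log_one_add_div_one_sub (by rwa [abs_of_nonneg hu0]))
  have hgeom := (hasSum_geometric_of_lt_one (sq_nonneg u) (by nlinarith)).mul_left
    (2 * u ^ (2 * N + 1) / (2 * N + 1))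
  -- the tail is dominated termwise by a geometric series of ratio `u ^ 2`
  have := hasSum_le (fun k => ?_) htail hgeom
  · rw [← div_eq_mul_inv, div_div] at this
    linarith
  have hcoef : 1 / (2 * ((k + N : ℕ) : ℝ) + 1) ≤ 1 / (2 * N + 1) :=
    one_div_le_one_div_of_le (by positivity) (by push_cast; linarith [k.cast_nonneg (α := ℝ)])
  calc 2 * (1 / (2 * ((k + N : ℕ) : ℝ) + 1)) * u ^ (2 * (k + N) + 1)
      = 2 * u ^ (2 * N + 1) * (u ^ 2) ^ k * (1 / (2 * ((k + N : ℕ) : ℝ) + 1)) := by ring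
    _ ≤ 2 * u ^ (2 * N + 1) * (u ^ 2) ^ k * (1 / (2 * N + 1)) := by gcongr
    _ = 2 * u ^ (2 * N + 1) / (2 * N + 1) * (u ^ 2) ^ k := by ring

lemma sub_cube_le_log_one_add_div_one_sub_mul {u : ℝ} (hu0 : 0 ≤ u) (hu1 : u ≤ 2 / 3) :
    u / 2 - 3 * u ^ 3 / 8 ≤ log ((1 + u) / (1 - u)) * ((1 - u ^ 2) / 4) := by
  have hlog := sum_range_le_log_one_add_div_one_sub hu0 (by linarith) 4
  simp only [sum_range_succ, sum_range_zero] at hlog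
  norm_num at hlog
  have h4 : u ^ 2 ≤ 4 / 9 := by nlinarith
  calc u / 2 - 3 * u ^ 3 / 8
      ≤ (2 * u + 2 / 3 * u ^ 3 + 2 / 5 * u ^ 5 + 2 / 7 * u ^ 7) * ((1 - u ^ 2) / 4) := by
        nlinarith [pow_nonneg hu0 5, pow_nonneg hu0 7,
          mul_nonneg (pow_nonneg hu0 3) (sub_nonneg.2 h4)]
    _ ≤ _ := by gcongr; nlinarith

lemma half_sub_cube_le_log_mul_div {q v : ℝ} (hq0 : 0 < q) (hq1 : q ≤ 2 / 3) (hv0 : 0 < v)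
    (hv1 : v < 1) :
    v / 2 - v ^ 3 / 6 ≤ log ((1 + q * v) / (1 - q * v)) * ((1 - (q * v) ^ 2) / 4) / q := by
  have hqv : q * v ≤ 2 / 3 := by nlinarith
  rw [le_div_iff₀ hq0]
  calc (v / 2 - v ^ 3 / 6) * q
      = q * v / 2 - 3 * (q * v) ^ 3 / 8 - q * v ^ 3 * (4 - 9 * q ^ 2) / 24 := by ring
    _ ≤ q * v / 2 - 3 * (q * v) ^ 3 / 8 :=
        sub_le_self _ (div_nonneg (mul_nonneg (by positivity) (by nlinarith)) (by norm_num))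
    _ ≤ _ := sub_cube_le_log_one_add_div_one_sub_mul (by positivity) hqv

lemma log_add_log_div_le_half_sub_cube {v : ℝ} (hv0 : 0 < v) (hv1 : v < 1) :
    2 * (log ((1 + v) / (1 - v)) + log ((1 + v / 3) / (1 - v / 3))) /
      (16 / ((1 - v) * (3 + v)) + 16 / ((1 + v) * (3 - v))) ≤ v / 2 - v ^ 3 / 6 := by
  have h1 : 0 < 1 - v ^ 2 := by nlinarith
  have h9 : 0 < 9 - v ^ 2 := by nlinarith
  have h3 : 0 < 3 - v ^ 2 := by nlinarith
  have hv := log_one_add_div_one_sub_le hv0.le hv1 2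
  have hv3 := log_one_add_div_one_sub_le (u := v / 3) (by positivity) (by linarith) 1
  simp only [sum_range_succ, sum_range_zero] at hv hv3
  norm_num at hv hv3
  have hden : 16 / ((1 - v) * (3 + v)) + 16 / ((1 + v) * (3 - v)) =
      32 * (3 - v ^ 2) / ((1 - v ^ 2) * (9 - v ^ 2)) := by
    have : 1 - v ≠ 0 := by linarith
    have : 3 - v ≠ 0 := by linarith
    field_simp
    ring
  rw [hden, div_le_iff₀ (by positivity)]
  have hgap : (v / 2 - v ^ 3 / 6) * (32 * (3 - v ^ 2) / ((1 - v ^ 2) * (9 - v ^ 2))) -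
      2 * (2 * v + 2 / 3 * v ^ 3 + 2 * v ^ 5 / (5 * (1 - v ^ 2)) +
        (2 * (v / 3) + 2 * (v / 3) ^ 3 / (3 * (1 - (v / 3) ^ 2)))) =
      8 * v ^ 3 * (50 + 37 * v ^ 2 - 3 * v ^ 4) / (45 * ((1 - v ^ 2) * (9 - v ^ 2))) := by
    have : 1 - (v / 3) ^ 2 = (9 - v ^ 2) / 9 := by ring
    rw [this]
    field_simp
    ring
  have : 0 ≤ 8 * v ^ 3 * (50 + 37 * v ^ 2 - 3 * v ^ 4) / (45 * ((1 - v ^ 2) * (9 - v ^ 2))) := by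
    have : 0 ≤ 50 + 37 * v ^ 2 - 3 * v ^ 4 := by nlinarith
    positivity
  linarith

lemma J_one_sub_div_two (u : ℝ) : J ((1 - u) / 2) = log ((1 + u) / (1 - u)) := by
  rw [J]
  congr 1
  field_simp
  ring

lemma U_one_sub_div_two (u : ℝ) : U ((1 - u) / 2) = (1 - u ^ 2) / 4 := by
  rw [U]
  ring

lemma bconv_one_sub_div_two (v q : ℝ) : bconv ((1 - v) / 2) ((1 - q) / 2) = (1 - q * v) / 2 := by
  rw [bconv]
  ring

lemma J_sub_J_eq_log_add_log {v : ℝ} (hv0 : -1 < v) (hv1 : v < 1) :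
    J ((1 - v) / 4) - J ((1 + v) / 4) =
      log ((1 + v) / (1 - v)) + log ((1 + v / 3) / (1 - v / 3)) := by
  have e1 : (1 - (1 - v) / 4) / ((1 - v) / 4) = (3 + v) / (1 - v) := by field_simp; ring
  have e2 : (1 - (1 + v) / 4) / ((1 + v) / 4) = (3 - v) / (1 + v) := by field_simp; ring
  have e3 : (1 + v / 3) / (1 - v / 3) = (3 + v) / (3 - v) := by field_simp
  rw [J, J, e1, e2, e3, log_div, log_div, log_div, log_div]
  · ring
  all_goals linarith

lemma one_div_U_add_one_div_U (v : ℝ) :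
    1 / U ((1 - v) / 4) + 1 / U ((1 + v) / 4) =
      16 / ((1 - v) * (3 + v)) + 16 / ((1 + v) * (3 - v)) := by
  rw [U, U, show (1 - v) / 4 * (1 - (1 - v) / 4) = (1 - v) * (3 + v) / 16 by ring,
    show (1 + v) / 4 * (1 - (1 + v) / 4) = (1 + v) * (3 - v) / 16 by ring, one_div_div, one_div_div]

lemma two_mul_J_sub_J_div_le_J_mul_U_div {q v : ℝ} (hq0 : 0 < q) (hq1 : q ≤ 2 / 3) (hv0 : 0 < v)
    (hv1 : v < 1) :
    2 * (J ((1 - v) / 4) - J ((1 + v) / 4)) / (1 / U ((1 - v) / 4) + 1 / U ((1 + v) / 4)) ≤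
      J ((1 - q * v) / 2) * U ((1 - q * v) / 2) / q := by
  rw [J_sub_J_eq_log_add_log (by linarith) hv1, one_div_U_add_one_div_U, J_one_sub_div_two,
    U_one_sub_div_two]
  exact (log_add_log_div_le_half_sub_cube hv0 hv1).trans
    (half_sub_cube_le_log_mul_div hq0 hq1 hv0 hv1)

lemma tendsto_J_mul_U_div_sub_two_mul_J_sub_J_div (p : ℝ) :
    Tendsto (fun x => J (bconv x p) * U (bconv x p) / (1 - 2 * p) -
        2 * (J (x / 2) - J ((1 - x) / 2)) / (1 / U (x / 2) + 1 / U ((1 - x) / 2)))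
      (nhds (1 / 2)) (nhds 0) := by
  convert ContinuousAt.tendsto ?_ using 2
  · rw [show bconv (1 / 2) p = 1 / 2 by rw [bconv]; ring]
    norm_num [J]
  · -- as a product with `(1 - 2 * p)⁻¹`, continuity needs no condition on `p`
    simp only [div_eq_mul_inv (b := 1 - 2 * p)]
    unfold J U bconv
    fun_prop (disch := (ring_nf; norm_num))

theorem stmt_13 (p : ℝ) (hp : p ∈ Ico (1 / 6 : ℝ) (1 / 2)) :
    (∀ x ∈ Ioo (0 : ℝ) (1 / 2),
      2 * (J (x / 2) - J ((1 - x) / 2)) / (1 / U (x / 2) + 1 / U ((1 - x) / 2)) ≤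
        J (bconv x p) * U (bconv x p) / (1 - 2 * p)) ∧
    Tendsto (fun x => J (bconv x p) * U (bconv x p) / (1 - 2 * p) -
        2 * (J (x / 2) - J ((1 - x) / 2)) / (1 / U (x / 2) + 1 / U ((1 - x) / 2)))
      (nhdsWithin (1 / 2) (Ioo (0 : ℝ) (1 / 2))) (nhds 0) := by
  refine ⟨fun x hx => ?_,
    tendsto_nhdsWithin_of_tendsto_nhds (tendsto_J_mul_U_div_sub_two_mul_J_sub_J_div p)⟩
  obtain ⟨v, rfl⟩ : ∃ v, x = (1 - v) / 2 := ⟨1 - 2 * x, by ring⟩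
  obtain ⟨q, rfl⟩ : ∃ q, p = (1 - q) / 2 := ⟨1 - 2 * p, by ring⟩
  rw [bconv_one_sub_div_two, show 1 - 2 * ((1 - q) / 2) = q by ring,
    show (1 - v) / 2 / 2 = (1 - v) / 4 by ring, show (1 - (1 - v) / 2) / 2 = (1 + v) / 4 by ring]
  exact two_mul_J_sub_J_div_le_J_mul_U_div (by linarith [hp.2]) (by linarith [hp.1])
    (by linarith [hx.2]) (by linarith [hx.1])
end

section
/- For p ∈ [1/6, 1/2), the ratio f'(x)/g_p'(x) is a decreasing function of x on (0, 1/2), where f(x) = h(x/2) + h((1-x)/2) - 1 and g_p(x) = h(x(1-p) + (1-x)p), with h the binary entropy function. -/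
/-!
Up to the common factor `1 / log 2`, `f'` and `g_p'` are
`F x = (log (2 - x) + log (1 - x) - log x - log (1 + x)) / 2` and
`G x = (1 - 2p) (log (1 - x ⋆ p) - log (x ⋆ p))`, and both vanish at `x = 1/2`.
By the monotone form of l'Hôpital's rule (Cauchy's mean value theorem on `[x, 1/2]`),
`F / G` decreases as soon as `F' / G'` does. In terms of `s = x (1 - x)`, which increases
on `(0, 1/2)`,
`F' / G' = (1 + 2s) (p (1 - p) + (1 - 2p)² s) / ((1 - 2p)² s (2 + s))`,
and for `p ≥ 1/6` this decreases in `s ∈ (0, 1/4]` by a polynomial inequality.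
-/

open Set

open Real

section MonotoneLHopital

variable {f g f' g' : ℝ → ℝ} {a b : ℝ}

theorem mul_deriv_neg_of_eq_zero_right (hgc : ContinuousOn g (Ioc a b))
    (hg : ∀ x ∈ Ioo a b, HasDerivAt g (g' x) x) (hg' : ∀ x ∈ Ioo a b, g' x ≠ 0)
    (hgb : g b = 0) {y : ℝ} (hy : y ∈ Ioo a b) : g y * g' y < 0 := by
  obtain ⟨d, hd, hslope⟩ := exists_hasDerivAt_eq_slope g g' hy.2
    (hgc.mono fun x hx => ⟨hy.1.trans_le hx.1, hx.2⟩)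
    fun x hx => hg x ⟨hy.1.trans hx.1, hx.2⟩
  have hd' : d ∈ Ioo a b := ⟨hy.1.trans hd.1, hd.2⟩
  -- Darboux: `g'` has constant sign on `(a, b)`
  have hsign : 0 < g' y * g' d := by
    rcases hasDerivWithinAt_forall_lt_or_forall_gt_of_forall_ne (convex_Ioo a b)
      (fun x hx => (hg x hx).hasDerivWithinAt) hg' with hneg | hpos
    · exact mul_pos_of_neg_of_neg (hneg y hy) (hneg d hd')
    · exact mul_pos (hpos y hy) (hpos d hd')
  rw [hgb, zero_sub, eq_div_iff (sub_pos.2 hy.2).ne'] at hslope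
  have hprod : g y * g' y = -((b - y) * (g' y * g' d)) := by
    linear_combination g' y * hslope
  linarith [mul_pos (sub_pos.2 hy.2) hsign]

theorem antitoneOn_div_of_antitoneOn_deriv_div (hfc : ContinuousOn f (Ioc a b))
    (hgc : ContinuousOn g (Ioc a b)) (hf : ∀ x ∈ Ioo a b, HasDerivAt f (f' x) x)
    (hg : ∀ x ∈ Ioo a b, HasDerivAt g (g' x) x) (hg' : ∀ x ∈ Ioo a b, g' x ≠ 0)
    (hfb : f b = 0) (hgb : g b = 0) (hmono : AntitoneOn (fun x => f' x / g' x) (Ioo a b)) :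
    AntitoneOn (fun x => f x / g x) (Ioo a b) := by
  have hsign := fun y hy => mul_deriv_neg_of_eq_zero_right hgc hg hg' hgb (y := y) hy
  have hgne : ∀ y ∈ Ioo a b, g y ≠ 0 := fun y hy h => by simpa [h] using hsign y hy
  have hquot : ∀ y ∈ Ioo a b,
      HasDerivAt (fun x => f x / g x) ((f' y * g y - f y * g' y) / g y ^ 2) y :=
    fun y hy => (hf y hy).div (hg y hy) (hgne y hy)
  refine antitoneOn_of_hasDerivWithinAt_nonpos (convex_Ioo a b)
    (fun y hy => (hquot y hy).continuousAt.continuousWithinAt)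
    (by simpa using fun y hy => (hquot y hy).hasDerivWithinAt) ?_
  rw [interior_Ioo]
  intro y hy
  have hsub : Icc y b ⊆ Ioc a b := fun x hx => ⟨hy.1.trans_le hx.1, hx.2⟩
  obtain ⟨c, hc, hcauchy⟩ := exists_ratio_hasDerivAt_eq_ratio_slope f f' hy.2 (hfc.mono hsub)
    (fun x hx => hf x ⟨hy.1.trans hx.1, hx.2⟩) g g' (hgc.mono hsub)
    (fun x hx => hg x ⟨hy.1.trans hx.1, hx.2⟩)
  have hc' : c ∈ Ioo a b := ⟨hy.1.trans hc.1, hc.2⟩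
  rw [hfb, hgb] at hcauchy
  have hnum : f' y * g y - f y * g' y = g y * g' y * (f' y / g' y - f' c / g' c) := by
    field_simp [hg' y hy, hg' c hc']
    linear_combination -g' y * hcauchy
  rw [hnum]
  exact div_nonpos_of_nonpos_of_nonneg (mul_nonpos_of_nonpos_of_nonneg (hsign y hy).le
    (sub_nonneg.2 (hmono hy hc' hc.1.le))) (sq_nonneg _)

end MonotoneLHopital

noncomputable section

def binConv (p x : ℝ) : ℝ := x * (1 - p) + (1 - x) * p

theorem binConv_mem_Ioo {p x : ℝ} (hp : p ∈ Icc 0 1) (hx : x ∈ Ioo 0 1) :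
    binConv p x ∈ Ioo 0 1 := by
  obtain ⟨hp0, hp1⟩ := hp
  obtain ⟨hx0, hx1⟩ := hx
  unfold binConv
  constructor <;> nlinarith [sq_nonneg (x - p), sq_nonneg (1 - x - p),
    mul_nonneg hp0 (sub_nonneg.2 hp1), mul_pos hx0 (sub_pos.2 hx1)]

theorem binConv_mul_one_sub (p x : ℝ) :
    binConv p x * (1 - binConv p x) = p * (1 - p) + (1 - 2 * p) ^ 2 * (x * (1 - x)) := by
  unfold binConv; ring

theorem hasDerivAt_binConv (p x : ℝ) : HasDerivAt (binConv p) (1 - 2 * p) x := by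
  have := ((hasDerivAt_id' x).mul_const (1 - p)).add
    (((hasDerivAt_id' x).const_sub 1).mul_const p)
  exact this.congr_deriv (by ring)

theorem binent_eq_binEntropy_div (x : ℝ) : binent x = binEntropy x / log 2 := by
  simp only [binent, binEntropy, logb, log_inv]; ring

theorem hasDerivAt_binent {t : ℝ} (ht : t ∈ Ioo 0 1) :
    HasDerivAt binent ((log (1 - t) - log t) / log 2) t := by
  have := (hasDerivAt_binEntropy ht.1.ne' ht.2.ne).div_const (log 2)
  exact this.congr_of_eventuallyEq (Filter.Eventually.of_forall binent_eq_binEntropy_div)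

-- `log 2` times the derivatives of `f` and `g_p`, and the derivatives of those.
def fDeriv (x : ℝ) : ℝ := (log (2 - x) + log (1 - x) - log x - log (1 + x)) / 2

def gDeriv (p x : ℝ) : ℝ := (1 - 2 * p) * (log (1 - binConv p x) - log (binConv p x))

def fDeriv2 (x : ℝ) : ℝ := -(1 + 2 * (x * (1 - x))) / (x * (1 - x) * (2 + x * (1 - x)))

def gDeriv2 (p x : ℝ) : ℝ := -(1 - 2 * p) ^ 2 / (binConv p x * (1 - binConv p x))

theorem hasDerivAt_f {x : ℝ} (hx : x ∈ Ioo 0 1) :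
    HasDerivAt (fun y => binent (y / 2) + binent ((1 - y) / 2) - 1) (fDeriv x / log 2) x := by
  obtain ⟨hx0, hx1⟩ := hx
  have h1 := (hasDerivAt_binent (t := x / 2) ⟨by linarith, by linarith⟩).comp x
    ((hasDerivAt_id' x).div_const 2)
  have h2 := (hasDerivAt_binent (t := (1 - x) / 2) ⟨by linarith, by linarith⟩).comp x
    (((hasDerivAt_id' x).const_sub 1).div_const 2)
  refine ((h1.add h2).sub_const 1).congr_deriv ?_
  rw [show (1 : ℝ) - x / 2 = (2 - x) / 2 by ring,
    show (1 : ℝ) - (1 - x) / 2 = (1 + x) / 2 by ring,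
    log_div (by linarith) two_ne_zero, log_div hx0.ne' two_ne_zero,
    log_div (by linarith) two_ne_zero, log_div (by linarith) two_ne_zero, fDeriv]
  ring

theorem hasDerivAt_g {p x : ℝ} (hu : binConv p x ∈ Ioo 0 1) :
    HasDerivAt (fun y => binent (binConv p y)) (gDeriv p x / log 2) x :=
  ((hasDerivAt_binent hu).comp x (hasDerivAt_binConv p x)).congr_deriv (by rw [gDeriv]; ring)

theorem hasDerivAt_fDeriv {x : ℝ} (hx : x ∈ Ioo 0 1) : HasDerivAt fDeriv (fDeriv2 x) x := by
  obtain ⟨hx0, hx1⟩ := hx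
  have h1 := ((hasDerivAt_id' x).const_sub 2).log (by simp; linarith)
  have h2 := ((hasDerivAt_id' x).const_sub 1).log (by simp; linarith)
  have h3 := (hasDerivAt_id' x).log hx0.ne'
  have h4 := ((hasDerivAt_id' x).const_add 1).log (by simp; linarith)
  refine ((((h1.add h2).sub h3).sub h4).div_const 2).congr_deriv ?_
  have : 2 + x * (1 - x) ≠ 0 := by nlinarith
  rw [fDeriv2]
  field_simp [show 2 - x ≠ 0 by linarith, show 1 - x ≠ 0 by linarith,
    show 1 + x ≠ 0 by linarith]
  ring

theorem hasDerivAt_gDeriv {p x : ℝ} (hu : binConv p x ∈ Ioo 0 1) :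
    HasDerivAt (gDeriv p) (gDeriv2 p x) x := by
  have h1 := ((hasDerivAt_binConv p x).const_sub 1).log (sub_pos.2 hu.2).ne'
  have h2 := (hasDerivAt_binConv p x).log hu.1.ne'
  refine ((h1.sub h2).const_mul (1 - 2 * p)).congr_deriv ?_
  rw [gDeriv2]
  field_simp [(sub_pos.2 hu.2).ne', hu.1.ne']
  ring

theorem gDeriv2_ne_zero {p x : ℝ} (hp : p ≠ 1 / 2) (hu : binConv p x ∈ Ioo 0 1) :
    gDeriv2 p x ≠ 0 := by
  have hq : (1 - 2 * p) ^ 2 ≠ 0 := pow_ne_zero 2 (by intro h; apply hp; linarith)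
  exact div_ne_zero (neg_ne_zero.2 hq) (mul_pos hu.1 (sub_pos.2 hu.2)).ne'

theorem fDeriv_half : fDeriv (1 / 2) = 0 := by
  norm_num [fDeriv]

theorem gDeriv_half (p : ℝ) : gDeriv p (1 / 2) = 0 := by
  have : binConv p (1 / 2) = 1 / 2 := by unfold binConv; ring
  rw [gDeriv, this]
  norm_num

def deriv2Ratio (p s : ℝ) : ℝ :=
  (1 + 2 * s) * (p * (1 - p) + (1 - 2 * p) ^ 2 * s) / (s * (2 + s) * (1 - 2 * p) ^ 2)

theorem fDeriv2_div_gDeriv2 (p x : ℝ) :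
    fDeriv2 x / gDeriv2 p x = deriv2Ratio p (x * (1 - x)) := by
  rw [fDeriv2, gDeriv2, binConv_mul_one_sub, deriv2Ratio, div_div_div_eq, neg_mul, mul_neg,
    neg_div_neg_eq]

theorem antitoneOn_deriv2Ratio {p : ℝ} (hp : p ∈ Ico (1 / 6) (1 / 2)) :
    AntitoneOn (deriv2Ratio p) (Ioc 0 (1 / 4)) := by
  intro s hs t ht hst
  obtain ⟨hp1, hp2⟩ := hp
  set m := p * (1 - p)
  set q := (1 - 2 * p) ^ 2
  have hm : 0 ≤ m := by nlinarith
  have hq : 0 < q := pow_pos (by linarith) 2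
  have hmq : 0 ≤ 34 * m - 3 * q := by
    nlinarith [mul_nonneg (sub_nonneg.2 hp1) (sub_nonneg.2 hp2.le)]
  have hst0 : 0 ≤ s * t := mul_nonneg hs.1.le ht.1.le
  have hst1 : s * t ≤ 1 / 16 := by nlinarith [mul_le_mul hs.2 ht.2 ht.1.le (by norm_num)]
  -- `q (t - s) H` is the numerator of `deriv2Ratio p s - deriv2Ratio p t`
  have hH : 0 ≤ 2 * m + m * (s + t) + (2 * m - 3 * q) * (s * t) := by
    nlinarith [mul_nonneg hm (by linarith : (0 : ℝ) ≤ 1 - 16 * (s * t)), mul_nonneg hmq hst0,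
      mul_nonneg hm (by linarith [hs.1, ht.1] : (0 : ℝ) ≤ s + t)]
  unfold deriv2Ratio
  rw [div_le_div_iff₀ (by have := ht.1; positivity) (by have := hs.1; positivity)]
  nlinarith [mul_nonneg (mul_nonneg hq.le (sub_nonneg.2 hst)) hH]

theorem monotoneOn_mul_one_sub : MonotoneOn (fun x : ℝ => x * (1 - x)) (Iic (1 / 2)) := by
  intro x hx y hy hxy
  simp only [mem_Iic] at hx hy
  nlinarith

theorem antitoneOn_fDeriv2_div_gDeriv2 {p : ℝ} (hp : p ∈ Ico (1 / 6) (1 / 2)) :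
    AntitoneOn (fun x => fDeriv2 x / gDeriv2 p x) (Ioo 0 (1 / 2)) := by
  have hmaps : MapsTo (fun x : ℝ => x * (1 - x)) (Ioo 0 (1 / 2)) (Ioc 0 (1 / 4)) :=
    fun x hx => ⟨mul_pos hx.1 (by linarith [hx.2]), by nlinarith [sq_nonneg (x - 1 / 2)]⟩
  exact ((antitoneOn_deriv2Ratio hp).comp_MonotoneOn
    (monotoneOn_mul_one_sub.mono fun x hx => mem_Iic.2 hx.2.le) hmaps).congr
    fun x _ => (fDeriv2_div_gDeriv2 p x).symm

end

theorem stmt_14 (p : ℝ) (hp : p ∈ Ico (1 / 6 : ℝ) (1 / 2)) :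
    AntitoneOn
      (fun x => deriv (fun y => binent (y / 2) + binent ((1 - y) / 2) - 1) x /
        deriv (fun y => binent (y * (1 - p) + (1 - y) * p)) x)
      (Ioo (0 : ℝ) (1 / 2)) := by
  have hp01 : p ∈ Icc 0 1 := ⟨by linarith [hp.1], by linarith [hp.2]⟩
  have hx01 : Ioc (0 : ℝ) (1 / 2) ⊆ Ioo 0 1 := Ioc_subset_Ioo_right (by norm_num)
  have hu : ∀ x ∈ Ioc (0 : ℝ) (1 / 2), binConv p x ∈ Ioo 0 1 :=
    fun x hx => binConv_mem_Ioo hp01 (hx01 hx)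
  have hratio : AntitoneOn (fun x => fDeriv x / gDeriv p x) (Ioo 0 (1 / 2)) :=
    antitoneOn_div_of_antitoneOn_deriv_div
      (fun x hx => (hasDerivAt_fDeriv (hx01 hx)).continuousAt.continuousWithinAt)
      (fun x hx => (hasDerivAt_gDeriv (hu x hx)).continuousAt.continuousWithinAt)
      (fun x hx => hasDerivAt_fDeriv (hx01 (Ioo_subset_Ioc_self hx)))
      (fun x hx => hasDerivAt_gDeriv (hu x (Ioo_subset_Ioc_self hx)))
      (fun x hx => gDeriv2_ne_zero hp.2.ne (hu x (Ioo_subset_Ioc_self hx)))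
      fDeriv_half (gDeriv_half p) (antitoneOn_fDeriv2_div_gDeriv2 hp)
  refine hratio.congr fun x hx => ?_
  have hg : HasDerivAt (fun y => binent (y * (1 - p) + (1 - y) * p)) (gDeriv p x / log 2) x :=
    hasDerivAt_g (hu x (Ioo_subset_Ioc_self hx))
  rw [(hasDerivAt_f (hx01 (Ioo_subset_Ioc_self hx))).deriv, hg.deriv,
    div_div_div_cancel_right₀ (log_pos one_lt_two).ne']
end
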